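/- arXiv:2509.17019 — 4 statements merged into one kernel-verified Lean document; each statement's English description precedes it below -/
import Mathlib

section
/- For every strong orientation K⃗_n of the complete graph K_n (n ≥ 3), ξ^C(K⃗_n) ≥ n(n−1) = ξ^C(K_n). -/
open Finset

variable {V : Type*}

/-- `WalkLen A n u v` means there is a directed walk of length `n` from `u` to `v`
in the digraph with arc relation `A`. -/
def WalkLen (A : V → V → Prop) : ℕ → V → V → Prop
  | 0, u, v => u = v
  | n + 1, u, v => ∃ w, A u w ∧ WalkLen A n w v

/-- A digraph is strongly connected if every vertex reaches every vertex. -/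
def StrongConn (A : V → V → Prop) : Prop :=
  ∀ u v : V, ∃ n, WalkLen A n u v

/-- Directed distance: length of a shortest directed walk. -/
noncomputable def ddist (A : V → V → Prop) (u v : V) : ℕ :=
  sInf {n | WalkLen A n u v}

/-- Maximum distance `md(u,v) = max{d⃗(u,v), d⃗(v,u)}`. -/
noncomputable def md (A : V → V → Prop) (u v : V) : ℕ :=
  max (ddist A u v) (ddist A v u)

/-- `mecc(u) = max_v md(u,v)`. -/
noncomputable def mecc [Fintype V] (A : V → V → Prop) (u : V) : ℕ :=
  Finset.univ.sup (md A u)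

/-- m-diameter. -/
noncomputable def mdiam [Fintype V] (A : V → V → Prop) : ℕ :=
  Finset.univ.sup (mecc A)

/-- m-radius. -/
noncomputable def mrad [Fintype V] (A : V → V → Prop) : ℕ :=
  sInf (Set.range (mecc A))

/-- Out-degree of a vertex in a digraph. -/
noncomputable def outDeg [Fintype V] (A : V → V → Prop) (u : V) : ℕ :=
  Nat.card {v // A u v}

/-- In-degree of a vertex in a digraph. -/
noncomputable def inDeg [Fintype V] (A : V → V → Prop) (u : V) : ℕ :=
  Nat.card {v // A v u}

/-- Number of arcs of a digraph. -/
noncomputable def numArcs [Fintype V] (A : V → V → Prop) : ℕ :=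
  Nat.card {p : V × V // A p.1 p.2}

/-- Eccentric connectivity index of a digraph:
`ξ^C(D) = (1/2) Σ_u (d_u^+ + d_u^-) · mecc(u)`. -/
noncomputable def xiC [Fintype V] (A : V → V → Prop) : ℚ :=
  (1 / 2) * ∑ u : V, ((outDeg A u + inDeg A u : ℕ) : ℚ) * (mecc A u : ℚ)

/-- Eccentricity of a vertex in a simple graph. -/
noncomputable def gecc [Fintype V] (G : SimpleGraph V) (u : V) : ℕ :=
  Finset.univ.sup (G.dist u)

/-- Degree of a vertex in a simple graph. -/
noncomputable def gdeg [Fintype V] (G : SimpleGraph V) (u : V) : ℕ :=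
  Nat.card {v // G.Adj u v}

/-- Eccentric connectivity index of a simple graph. -/
noncomputable def xiCG [Fintype V] (G : SimpleGraph V) : ℚ :=
  ∑ u : V, (gdeg G u : ℚ) * (gecc G u : ℚ)


lemma exists_arc_in' (A : V → V → Prop) : ∀ n (w u : V), w ≠ u → WalkLen A n w u → ∃ v, A v u := by
  intro n
  induction n with
  | zero => intro w u h hw; exact absurd hw h
  | succ n ih =>
    intro w u h hw
    obtain ⟨x, hx, hxw⟩ := hw
    by_cases hxu : x = u
    · exact ⟨w, hxu ▸ hx⟩
    · exact ih x u hxu hxw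

lemma mecc_ge_two' [Fintype V] (A : V → V → Prop) (hn : 3 ≤ Fintype.card V)
    (hirr : ∀ u, ¬ A u u) (htour : ∀ u v : V, u ≠ v → (A u v ↔ ¬ A v u))
    (hA : StrongConn A) (u : V) : 2 ≤ mecc A u := by
  obtain ⟨w, hw⟩ : ∃ w : V, w ≠ u := Fintype.exists_ne_of_one_lt_card (by omega) u
  obtain ⟨n, hwalk⟩ := hA w u
  obtain ⟨v, hv⟩ := exists_arc_in' A n w u hw hwalk
  have hvu : v ≠ u := fun h => hirr u (h ▸ hv)
  have hd : 2 ≤ ddist A u v := by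
    have hne : {n | WalkLen A n u v}.Nonempty := ⟨(hA u v).choose, (hA u v).choose_spec⟩
    have hmem := Nat.sInf_mem hne
    by_contra hlt
    push_neg at hlt
    unfold ddist at hlt
    rcases (by omega : sInf {n | WalkLen A n u v} = 0 ∨ sInf {n | WalkLen A n u v} = 1) with h | h
    · rw [h] at hmem; exact hvu (hmem.symm)
    · rw [h] at hmem
      obtain ⟨x, hx, hxv⟩ := hmem
      have hxv' : x = v := hxv
      rw [hxv'] at hx
      exact (htour u v hvu.symm).mp hx hv
  calc 2 ≤ ddist A u v := hd
    _ ≤ md A u v := le_max_left _ _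
    _ ≤ mecc A u := Finset.le_sup (mem_univ v)

lemma deg_split' [Fintype V] (A : V → V → Prop) (hirr : ∀ u, ¬ A u u)
    (htour : ∀ u v : V, u ≠ v → (A u v ↔ ¬ A v u)) (u : V) :
    outDeg A u + inDeg A u = Fintype.card V - 1 := by
  classical
  unfold outDeg inDeg
  rw [Nat.card_eq_fintype_card, Nat.card_eq_fintype_card,
    Fintype.card_subtype, Fintype.card_subtype]
  rw [← Finset.card_union_of_disjoint]
  · rw [← Finset.filter_or]
    have : (univ.filter fun v => A u v ∨ A v u) = univ.filter fun v => v ≠ u := by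
      apply Finset.filter_congr
      intro v _
      constructor
      · rintro (h | h) rfl <;> exact hirr _ h
      · intro hv
        by_cases h : A u v
        · exact Or.inl h
        · exact Or.inr (((htour v u hv).mpr) (by simpa using h))
    rw [this, Finset.filter_ne', Finset.card_erase_of_mem (mem_univ u), Finset.card_univ]
  · rw [Finset.disjoint_filter]
    intro v _ h1 h2
    have hv : v ≠ u := fun h => hirr u (h ▸ h1)
    exact ((htour u v hv.symm).mp h1) h2

lemma gecc_top' [Fintype V] (hn : 2 ≤ Fintype.card V) (u : V) :
    gecc (⊤ : SimpleGraph V) u = 1 := by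
  obtain ⟨v, hv⟩ : ∃ v : V, v ≠ u := Fintype.exists_ne_of_one_lt_card (by omega) u
  have hdv : (⊤ : SimpleGraph V).dist u v = 1 :=
    SimpleGraph.dist_eq_one_iff_adj.mpr (by simp [hv.symm])
  apply le_antisymm
  · apply Finset.sup_le
    intro w _
    by_cases h : u = w
    · simp [h, SimpleGraph.dist_self]
    · exact le_of_eq (SimpleGraph.dist_eq_one_iff_adj.mpr (by simp [h]))
  · calc 1 = (⊤ : SimpleGraph V).dist u v := hdv.symm
      _ ≤ _ := Finset.le_sup (mem_univ v)

lemma gdeg_top' [Fintype V] (u : V) :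
    gdeg (⊤ : SimpleGraph V) u = Fintype.card V - 1 := by
  classical
  unfold gdeg
  rw [Nat.card_eq_fintype_card, Fintype.card_subtype]
  simp only [SimpleGraph.top_adj]
  have : (univ.filter fun v => u ≠ v) = univ.erase u := by
    ext v; simp [eq_comm, Ne]
  rw [this, Finset.card_erase_of_mem (mem_univ u), Finset.card_univ]

/-- For every strong orientation (tournament) of `K_n` with `n ≥ 3`,
`ξ^C(K⃗_n) ≥ n(n−1) = ξ^C(K_n)`. -/
theorem xiC_strong_orientation_ge [Fintype V] (A : V → V → Prop)
    (hn : 3 ≤ Fintype.card V) (hirr : ∀ u, ¬ A u u)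
    (htour : ∀ u v : V, u ≠ v → (A u v ↔ ¬ A v u)) (hA : StrongConn A) :
    xiCG (⊤ : SimpleGraph V) = (Fintype.card V : ℚ) * ((Fintype.card V : ℚ) - 1) ∧
      (Fintype.card V : ℚ) * ((Fintype.card V : ℚ) - 1) ≤ xiC A := by
  classical
  set n := Fintype.card V with hnc
  have h1n : (1:ℕ) ≤ n := by omega
  have hcast : ((n - 1 : ℕ) : ℚ) = (n : ℚ) - 1 := by
    push_cast [Nat.cast_sub h1n]; ring
  constructor
  · unfold xiCG
    have : ∀ u : V, (gdeg (⊤ : SimpleGraph V) u : ℚ) * (gecc (⊤ : SimpleGraph V) u : ℚ)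
        = (n : ℚ) - 1 := by
      intro u
      rw [gdeg_top' u, gecc_top' (by omega) u, hcast]
      ring
    rw [Finset.sum_congr rfl fun u _ => this u, Finset.sum_const, card_univ, ← hnc]
    simp [nsmul_eq_mul]
  · unfold xiC
    have hterm : ∀ u ∈ (univ : Finset V),
        ((n : ℚ) - 1) * 2 ≤ ((outDeg A u + inDeg A u : ℕ) : ℚ) * (mecc A u : ℚ) := by
      intro u _
      rw [deg_split' A hirr htour u, hcast]
      have h2 : (2 : ℚ) ≤ (mecc A u : ℚ) := by
        exact_mod_cast mecc_ge_two' A hn hirr htour hA u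
      have hn1 : (0 : ℚ) ≤ (n : ℚ) - 1 := by
        have : (1:ℚ) ≤ (n:ℚ) := by exact_mod_cast h1n
        linarith
      nlinarith
    have hsum := Finset.sum_le_sum hterm
    rw [Finset.sum_const, card_univ, ← hnc] at hsum
    have : (n : ℚ) * (((n : ℚ) - 1) * 2) ≤
        ∑ u : V, ((outDeg A u + inDeg A u : ℕ) : ℚ) * (mecc A u : ℚ) := by
      simpa [nsmul_eq_mul] using hsum
    linarith
end

section
/- If D is a strongly connected digraph on n ≥ 4 vertices, then ξ^C(D) ≥ 3(n−1), with equality if and only if D is the complete biorientation of the star S_n. -/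
open Finset

variable {V : Type*}

section AuxLemmas

variable {A : V → V → Prop}

lemma wl_one {u v : V} : WalkLen A 1 u v ↔ A u v :=
  ⟨fun ⟨_, h, hw⟩ => hw ▸ h, fun h => ⟨v, h, rfl⟩⟩

lemma wl_last : ∀ {n : ℕ} {u v : V}, WalkLen A (n + 1) u v → ∃ x, A x v := by
  intro n
  induction n with
  | zero => intro u v ⟨w, hw, he⟩; exact ⟨u, (he : w = v) ▸ hw⟩
  | succ k ih => intro u v ⟨w, _, h2⟩; exact ih h2

lemma ddist_le {u v : V} {n : ℕ} (h : WalkLen A n u v) : ddist A u v ≤ n := Nat.sInf_le h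

lemma ddist_self (u : V) : ddist A u u = 0 :=
  Nat.le_zero.mp (ddist_le (show WalkLen A 0 u u from rfl))

lemma wl_ddist (hA : StrongConn A) (u v : V) : WalkLen A (ddist A u v) u v :=
  Nat.sInf_mem (hA u v)

lemma one_le_ddist (hA : StrongConn A) {u v : V} (h : u ≠ v) : 1 ≤ ddist A u v := by
  rcases Nat.eq_zero_or_pos (ddist A u v) with h0 | h1
  · have hw := wl_ddist hA u v
    rw [h0] at hw
    exact absurd hw h
  · exact h1

lemma ddist_eq_one (hA : StrongConn A) {u v : V} (hne : u ≠ v) (h : A u v) :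
    ddist A u v = 1 :=
  le_antisymm (ddist_le (wl_one.mpr h)) (one_le_ddist hA hne)

lemma ddist_eq_two (hA : StrongConn A) {u v : V} (hne : u ≠ v) (hno : ¬ A u v)
    (w : V) (h1 : A u w) (h2 : A w v) : ddist A u v = 2 := by
  have hle : ddist A u v ≤ 2 := ddist_le ⟨w, h1, wl_one.mpr h2⟩
  have h1' := one_le_ddist hA hne
  have hmem := wl_ddist hA u v
  rcases (by omega : ddist A u v = 1 ∨ ddist A u v = 2) with h | h
  · rw [h] at hmem; exact absurd (wl_one.mp hmem) hno
  · exact h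

lemma md_self (u : V) : md A u u = 0 := by
  simp [md, ddist_self]

lemma one_le_md (hA : StrongConn A) {u v : V} (h : u ≠ v) : 1 ≤ md A u v :=
  le_trans (one_le_ddist hA h) (le_max_left _ _)

variable [Fintype V]

lemma md_le_mecc (u v : V) : md A u v ≤ mecc A u := Finset.le_sup (Finset.mem_univ v)

lemma mecc_le {u : V} {k : ℕ} (h : ∀ v, md A u v ≤ k) : mecc A u ≤ k :=
  Finset.sup_le fun v _ => h v

lemma one_le_mecc (hA : StrongConn A) (hn : 2 ≤ Fintype.card V) (u : V) :
    1 ≤ mecc A u := by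
  obtain ⟨v, hv⟩ := Fintype.exists_ne_of_one_lt_card (by omega) u
  exact le_trans (one_le_md hA (Ne.symm hv)) (md_le_mecc u v)

/-- hub: bidirectionally adjacent to everything else -/
def IsHub (A : V → V → Prop) (c : V) : Prop := ∀ v, v ≠ c → A c v ∧ A v c

lemma hub_of_mecc_le_one (hA : StrongConn A) {c : V} (h : mecc A c ≤ 1) : IsHub A c := by
  intro v hv
  have h1 : md A c v ≤ 1 := le_trans (md_le_mecc c v) h
  have d1 : ddist A c v = 1 :=
    le_antisymm (le_trans (le_max_left _ _) h1) (one_le_ddist hA (Ne.symm hv))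
  have d2 : ddist A v c = 1 :=
    le_antisymm (le_trans (le_max_right _ _) h1) (one_le_ddist hA hv)
  exact ⟨wl_one.mp (d1 ▸ wl_ddist hA c v), wl_one.mp (d2 ▸ wl_ddist hA v c)⟩

lemma two_le_mecc_of_not_hub (hA : StrongConn A) (hn : 2 ≤ Fintype.card V) {c : V}
    (h : ¬ IsHub A c) : 2 ≤ mecc A c := by
  by_contra hc
  push_neg at hc
  exact h (hub_of_mecc_le_one hA (by omega))

lemma outDeg_eq_ncard (u : V) : outDeg A u = {v | A u v}.ncard :=
  Nat.card_coe_set_eq _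

lemma inDeg_eq_ncard (u : V) : inDeg A u = {v | A v u}.ncard :=
  Nat.card_coe_set_eq _

lemma exists_out (hA : StrongConn A) (hn : 2 ≤ Fintype.card V) (u : V) : ∃ v, A u v := by
  obtain ⟨w, hw⟩ := Fintype.exists_ne_of_one_lt_card (by omega) u
  have h := wl_ddist hA u w
  have h1 := one_le_ddist hA (Ne.symm hw)
  rcases hd : ddist A u w with _ | k
  · omega
  · rw [hd] at h; obtain ⟨x, hx, -⟩ := h; exact ⟨x, hx⟩

lemma exists_in (hA : StrongConn A) (hn : 2 ≤ Fintype.card V) (u : V) : ∃ v, A v u := by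
  obtain ⟨w, hw⟩ := Fintype.exists_ne_of_one_lt_card (by omega) u
  have h := wl_ddist hA w u
  have h1 := one_le_ddist hA hw
  rcases hd : ddist A w u with _ | k
  · omega
  · rw [hd] at h; exact wl_last h

lemma one_le_outDeg (hA : StrongConn A) (hn : 2 ≤ Fintype.card V) (u : V) :
    1 ≤ outDeg A u := by
  obtain ⟨v, hv⟩ := exists_out hA hn u
  have : Nonempty {v // A u v} := ⟨⟨v, hv⟩⟩
  exact Nat.card_pos

lemma one_le_inDeg (hA : StrongConn A) (hn : 2 ≤ Fintype.card V) (u : V) :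
    1 ≤ inDeg A u := by
  obtain ⟨v, hv⟩ := exists_in hA hn u
  have : Nonempty {v // A v u} := ⟨⟨v, hv⟩⟩
  exact Nat.card_pos

lemma ncard_compl_singleton (c : V) : ({c}ᶜ : Set V).ncard = Fintype.card V - 1 := by
  have := Set.ncard_add_ncard_compl ({c} : Set V)
  rw [Set.ncard_singleton, Nat.card_eq_fintype_card] at this
  omega

lemma ncard_compl_pair {a b : V} (h : a ≠ b) :
    (({a, b} : Set V)ᶜ).ncard = Fintype.card V - 2 := by
  have := Set.ncard_add_ncard_compl ({a, b} : Set V)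
  rw [Set.ncard_pair h, Nat.card_eq_fintype_card] at this
  omega

lemma hub_outDeg (hirr : ∀ u, ¬ A u u) {c : V} (hc : IsHub A c) :
    Fintype.card V - 1 ≤ outDeg A c := by
  rw [outDeg_eq_ncard]
  rw [← ncard_compl_singleton c]
  exact Set.ncard_le_ncard (fun v hv => (hc v hv).1) (Set.toFinite _)

lemma hub_inDeg (hirr : ∀ u, ¬ A u u) {c : V} (hc : IsHub A c) :
    Fintype.card V - 1 ≤ inDeg A c := by
  rw [inDeg_eq_ncard, ← ncard_compl_singleton c]
  exact Set.ncard_le_ncard (fun v hv => (hc v hv).2) (Set.toFinite _)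

end AuxLemmas

section Main

variable [Fintype V] [DecidableEq V] {A : V → V → Prop}

lemma exists_ne_ne (h : 3 ≤ Fintype.card V) (a b : V) : ∃ c, c ≠ a ∧ c ≠ b := by
  by_contra h'
  push_neg at h'
  have hsub : (univ : Finset V) ⊆ {a, b} := by
    intro c _
    rcases eq_or_ne c a with rfl | hca
    · exact Finset.mem_insert_self _ _
    · rw [h' c hca]; exact Finset.mem_insert.mpr (Or.inr (Finset.mem_singleton_self _))
  have := Finset.card_le_card hsub
  have h2 : ({a, b} : Finset V).card ≤ 2 := Finset.card_insert_le _ _ |>.trans (by simp)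
  rw [Finset.card_univ] at this
  omega

lemma four_le_f (hn : 4 ≤ Fintype.card V) (hirr : ∀ u, ¬ A u u) (hA : StrongConn A)
    (v : V) : 4 ≤ (outDeg A v + inDeg A v) * mecc A v := by
  by_cases hv : IsHub A v
  · have h1 := hub_outDeg hirr hv
    have h1' := hub_inDeg hirr hv
    have h2 := one_le_mecc hA (by omega) v
    have hle : 2 * (Fintype.card V - 1) ≤ outDeg A v + inDeg A v := by omega
    calc 4 ≤ (2 * (Fintype.card V - 1)) * 1 := by omega
    _ ≤ (outDeg A v + inDeg A v) * mecc A v := Nat.mul_le_mul hle h2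
  · have h1 := one_le_outDeg hA (by omega) v
    have h2 := one_le_inDeg hA (by omega) v
    have h3 := two_le_mecc_of_not_hub hA (by omega) hv
    have hle : 2 ≤ outDeg A v + inDeg A v := by omega
    calc 4 = 2 * 2 := rfl
    _ ≤ (outDeg A v + inDeg A v) * mecc A v := Nat.mul_le_mul hle h3

lemma sum_split (c : V) (f : V → ℕ) :
    ∑ u, f u = f c + ∑ u ∈ univ.erase c, f u :=
  (Finset.add_sum_erase univ f (mem_univ c)).symm

lemma sum_erase_ge (c : V) (f : V → ℕ) {k : ℕ} (h : ∀ v, v ≠ c → k ≤ f v) :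
    (Fintype.card V - 1) * k ≤ ∑ u ∈ univ.erase c, f u := by
  have := Finset.card_nsmul_le_sum (univ.erase c) f k
    (fun x hx => h x (Finset.mem_erase.mp hx).1)
  rwa [Finset.card_erase_of_mem (mem_univ c), Finset.card_univ, smul_eq_mul] at this

lemma S_hub (hn : 4 ≤ Fintype.card V) (hirr : ∀ u, ¬ A u u) (hA : StrongConn A)
    {c : V} (hc : IsHub A c) :
    6 * (Fintype.card V - 1) ≤ ∑ u, (outDeg A u + inDeg A u) * mecc A u := by
  set f : V → ℕ := fun u => (outDeg A u + inDeg A u) * mecc A u with hf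
  have hfc : (2 * (Fintype.card V - 1)) * 1 ≤ f c := by
    have h1 := hub_outDeg hirr hc
    have h1' := hub_inDeg hirr hc
    have hle : 2 * (Fintype.card V - 1) ≤ outDeg A c + inDeg A c := by omega
    exact Nat.mul_le_mul hle (one_le_mecc hA (by omega) c)
  have h4 : (Fintype.card V - 1) * 4 ≤ ∑ u ∈ univ.erase c, f u :=
    sum_erase_ge c f (fun v _ => four_le_f hn hirr hA v)
  rw [sum_split c f]
  omega

/-- Unique out-neighbour property forces big out-degree one step later. -/
lemma step_out (hA : StrongConn A) {v q : V} (hmv : mecc A v ≤ 2)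
    (hq : {x | A v x} = {q}) : ∀ x, x ≠ v → x ≠ q → A q x := by
  intro x hxv hxq
  have hd2 : ddist A v x ≤ 2 :=
    le_trans (le_trans (le_max_left _ _) (md_le_mecc v x)) hmv
  have h1 : 1 ≤ ddist A v x := one_le_ddist hA (Ne.symm hxv)
  have hmem := wl_ddist hA v x
  rcases (by omega : ddist A v x = 1 ∨ ddist A v x = 2) with h | h
  · rw [h] at hmem
    have : x ∈ {x | A v x} := wl_one.mp hmem
    rw [hq] at this
    exact absurd this hxq
  · rw [h] at hmem
    obtain ⟨w, hvw, hwx⟩ := hmem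
    have : w ∈ {x | A v x} := hvw
    rw [hq] at this
    rw [Set.mem_singleton_iff] at this
    subst this
    exact wl_one.mp hwx

lemma step_in (hA : StrongConn A) {v p : V} (hmv : mecc A v ≤ 2)
    (hp : {x | A x v} = {p}) : ∀ x, x ≠ v → x ≠ p → A x p := by
  intro x hxv hxp
  have hd2 : ddist A x v ≤ 2 :=
    le_trans (le_trans (le_max_right _ _) (md_le_mecc v x)) hmv
  have h1 : 1 ≤ ddist A x v := one_le_ddist hA hxv
  have hmem := wl_ddist hA x v
  rcases (by omega : ddist A x v = 1 ∨ ddist A x v = 2) with h | h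
  · rw [h] at hmem
    have : x ∈ {x | A x v} := wl_one.mp hmem
    rw [hp] at this
    exact absurd this hxp
  · rw [h] at hmem
    obtain ⟨w, hxw, hwv⟩ := hmem
    have : w ∈ {x | A x v} := wl_one.mp hwv
    rw [hp, Set.mem_singleton_iff] at this
    subst this
    exact hxw

lemma S_no_hub (hn : 4 ≤ Fintype.card V) (hirr : ∀ u, ¬ A u u) (hA : StrongConn A)
    (hnohub : ∀ c, ¬ IsHub A c) :
    6 * (Fintype.card V - 1) + 1 ≤ ∑ u, (outDeg A u + inDeg A u) * mecc A u := by
  set n := Fintype.card V with hn'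
  set f : V → ℕ := fun u => (outDeg A u + inDeg A u) * mecc A u with hf
  have hm2 : ∀ u, 2 ≤ mecc A u := fun u => two_le_mecc_of_not_hub hA (by omega) (hnohub u)
  by_cases hbad : ∃ v, outDeg A v + inDeg A v ≤ 2 ∧ mecc A v ≤ 2
  · obtain ⟨v, hdv, hmv⟩ := hbad
    have hov := one_le_outDeg hA (by omega) v
    have hiv := one_le_inDeg hA (by omega) v
    have ho1 : outDeg A v = 1 := by omega
    have hi1 : inDeg A v = 1 := by omega
    have hco : ({x | A v x} : Set V).ncard = 1 := by rw [← outDeg_eq_ncard]; exact ho1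
    have hci : ({x | A x v} : Set V).ncard = 1 := by rw [← inDeg_eq_ncard]; exact hi1
    obtain ⟨q, hq⟩ := Set.ncard_eq_one.mp hco
    obtain ⟨p, hp⟩ := Set.ncard_eq_one.mp hci
    have hAvq : A v q := by
      have h : q ∈ {x | A v x} := by rw [hq]; exact rfl
      exact h
    have hApv : A p v := by
      have h : p ∈ {x | A x v} := by rw [hp]; exact rfl
      exact h
    have hqv : q ≠ v := fun h => hirr v (h ▸ hAvq)
    have hpv : p ≠ v := fun h => hirr v (h ▸ hApv)
    -- outDeg q ≥ n - 2
    have hoq : n - 2 ≤ outDeg A q := by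
      rw [outDeg_eq_ncard, ← ncard_compl_pair (Ne.symm hqv)]
      apply Set.ncard_le_ncard _ (Set.toFinite _)
      intro x hx
      simp only [Set.mem_compl_iff, Set.mem_insert_iff, Set.mem_singleton_iff, not_or] at hx
      exact step_out hA hmv hq x hx.1 hx.2
    have hip : n - 2 ≤ inDeg A p := by
      rw [inDeg_eq_ncard, ← ncard_compl_pair (Ne.symm hpv)]
      apply Set.ncard_le_ncard _ (Set.toFinite _)
      intro x hx
      simp only [Set.mem_compl_iff, Set.mem_insert_iff, Set.mem_singleton_iff, not_or] at hx
      exact step_in hA hmv hp x hx.1 hx.2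
    by_cases hpq : p = q
    · have hip' : n - 2 ≤ inDeg A q := hpq ▸ hip
      have hfq : (2 * (n - 2)) * 2 ≤ f q := by
        have hle : 2 * (n - 2) ≤ outDeg A q + inDeg A q := by omega
        exact Nat.mul_le_mul hle (hm2 q)
      have hrest : (n - 1) * 4 ≤ ∑ u ∈ univ.erase q, f u :=
        sum_erase_ge q f (fun x _ => four_le_f hn hirr hA x)
      rw [sum_split q f]
      omega
    · have hfq : (n - 1) * 2 ≤ f q := by
        have h1 := one_le_inDeg hA (by omega) q
        have hle : n - 1 ≤ outDeg A q + inDeg A q := by omega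
        exact Nat.mul_le_mul hle (hm2 q)
      have hfp : (n - 1) * 2 ≤ f p := by
        have h1 := one_le_outDeg hA (by omega) p
        have hle : n - 1 ≤ outDeg A p + inDeg A p := by omega
        exact Nat.mul_le_mul hle (hm2 p)
      have hpmem : p ∈ univ.erase q := Finset.mem_erase.mpr ⟨hpq, mem_univ p⟩
      have hsplit2 : ∑ u ∈ univ.erase q, f u
          = f p + ∑ u ∈ (univ.erase q).erase p, f u :=
        (Finset.add_sum_erase _ f hpmem).symm
      have hcard2 : ((univ.erase q).erase p).card = n - 2 := by
        rw [Finset.card_erase_of_mem hpmem, Finset.card_erase_of_mem (mem_univ q),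
          Finset.card_univ]
        omega
      have hrest : (n - 2) * 4 ≤ ∑ u ∈ (univ.erase q).erase p, f u := by
        have := Finset.card_nsmul_le_sum ((univ.erase q).erase p) f 4
          (fun x _ => four_le_f hn hirr hA x)
        rwa [hcard2, smul_eq_mul] at this
      rw [sum_split q f, hsplit2]
      omega
  · push_neg at hbad
    have h6 : ∀ x, 6 ≤ f x := by
      intro x
      have hox := one_le_outDeg hA (by omega) x
      have hix := one_le_inDeg hA (by omega) x
      rcases le_or_gt (outDeg A x + inDeg A x) 2 with h | h
      · have h3 := hbad x h
        exact le_trans (by omega) (Nat.mul_le_mul (show 2 ≤ outDeg A x + inDeg A x by omega) h3)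
      · exact le_trans (by omega) (Nat.mul_le_mul (show 3 ≤ outDeg A x + inDeg A x by omega) (hm2 x))
    have := Finset.card_nsmul_le_sum (univ : Finset V) f 6 (fun x _ => h6 x)
    rw [Finset.card_univ, smul_eq_mul] at this
    omega

end Main

section Eq

variable [Fintype V] [DecidableEq V] {A : V → V → Prop}

lemma eq_backward (hn : 4 ≤ Fintype.card V) (hirr : ∀ u, ¬ A u u) (hA : StrongConn A)
    {c : V} (hstar : ∀ u v : V, A u v ↔ ((u = c ∨ v = c) ∧ u ≠ v)) :
    ∑ u, (outDeg A u + inDeg A u) * mecc A u = 6 * (Fintype.card V - 1) := by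
  set n := Fintype.card V with hndef
  have hAc : ∀ v : V, v ≠ c → A c v := fun v hv => (hstar c v).mpr ⟨Or.inl rfl, Ne.symm hv⟩
  have hAc' : ∀ v : V, v ≠ c → A v c := fun v hv => (hstar v c).mpr ⟨Or.inr rfl, hv⟩
  have hnotA : ∀ u v : V, u ≠ c → v ≠ c → ¬ A u v := by
    intro u v hu hv h
    rcases ((hstar u v).mp h).1 with h' | h'
    · exact hu h'
    · exact hv h'
  -- ddist values
  have dcv : ∀ v : V, v ≠ c → ddist A c v = 1 :=
    fun v hv => ddist_eq_one hA (Ne.symm hv) (hAc v hv)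
  have dvc : ∀ v : V, v ≠ c → ddist A v c = 1 :=
    fun v hv => ddist_eq_one hA hv (hAc' v hv)
  have duv : ∀ u v : V, u ≠ c → v ≠ c → u ≠ v → ddist A u v = 2 :=
    fun u v hu hv huv =>
      ddist_eq_two hA huv (hnotA u v hu hv) c (hAc' u hu) (hAc v hv)
  -- mecc values
  have hmc : mecc A c = 1 := by
    apply le_antisymm _ (one_le_mecc hA (by omega) c)
    apply mecc_le
    intro v
    rcases eq_or_ne v c with rfl | hv
    · rw [md_self]; omega
    · unfold md
      rw [dcv v hv, dvc v hv]; omega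
  have hmv : ∀ v : V, v ≠ c → mecc A v = 2 := by
    intro v hv
    apply le_antisymm
    · apply mecc_le
      intro w
      rcases eq_or_ne w v with rfl | hwv
      · rw [md_self]; omega
      · rcases eq_or_ne w c with rfl | hwc
        · unfold md; rw [dcv v hv, dvc v hv]; omega
        · unfold md
          rw [duv v w hv hwc (Ne.symm hwv), duv w v hwc hv hwv]; omega
    · obtain ⟨w, hwv, hwc⟩ := exists_ne_ne (by omega) v c
      have : md A v w = 2 := by
        unfold md
        rw [duv v w hv hwc (Ne.symm hwv), duv w v hwc hv hwv]; omega
      exact this ▸ md_le_mecc v w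
  -- degree values
  have hoc : outDeg A c = n - 1 := by
    rw [outDeg_eq_ncard]
    have hset : {x | A c x} = ({c}ᶜ : Set V) := by
      ext x
      simp only [Set.mem_setOf_eq, Set.mem_compl_iff, Set.mem_singleton_iff]
      constructor
      · intro h hx; exact hirr c (hx ▸ h)
      · intro hx; exact hAc x hx
    rw [hset, ncard_compl_singleton]
  have hic : inDeg A c = n - 1 := by
    rw [inDeg_eq_ncard]
    have hset : {x | A x c} = ({c}ᶜ : Set V) := by
      ext x
      simp only [Set.mem_setOf_eq, Set.mem_compl_iff, Set.mem_singleton_iff]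
      constructor
      · intro h hx; exact hirr c (hx ▸ h)
      · intro hx; exact hAc' x hx
    rw [hset, ncard_compl_singleton]
  have hov : ∀ v : V, v ≠ c → outDeg A v = 1 := by
    intro v hv
    rw [outDeg_eq_ncard]
    have hset : {x | A v x} = ({c} : Set V) := by
      ext x
      simp only [Set.mem_setOf_eq, Set.mem_singleton_iff]
      constructor
      · intro h
        rcases ((hstar v x).mp h).1 with h' | h'
        · exact absurd h' hv
        · exact h'
      · rintro rfl; exact hAc' v hv
    rw [hset, Set.ncard_singleton]
  have hiv : ∀ v : V, v ≠ c → inDeg A v = 1 := by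
    intro v hv
    rw [inDeg_eq_ncard]
    have hset : {x | A x v} = ({c} : Set V) := by
      ext x
      simp only [Set.mem_setOf_eq, Set.mem_singleton_iff]
      constructor
      · intro h
        rcases ((hstar x v).mp h).1 with h' | h'
        · exact h'
        · exact absurd h' hv
      · rintro rfl; exact hAc v hv
    rw [hset, Set.ncard_singleton]
  -- assemble
  set f : V → ℕ := fun u => (outDeg A u + inDeg A u) * mecc A u with hf
  have hfc : f c = ((n - 1) + (n - 1)) * 1 := by
    simp only [hf, hoc, hic, hmc]
  have hfv : ∀ v : V, v ≠ c → f v = 4 := by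
    intro v hv
    simp only [hf, hov v hv, hiv v hv, hmv v hv]
  have hsum : ∑ u ∈ univ.erase c, f u = (n - 1) * 4 := by
    rw [Finset.sum_congr rfl (fun x hx => hfv x (Finset.mem_erase.mp hx).1)]
    rw [Finset.sum_const, Finset.card_erase_of_mem (mem_univ c), Finset.card_univ,
      smul_eq_mul]
  rw [sum_split c f, hfc, hsum]
  omega

lemma eq_forward (hn : 4 ≤ Fintype.card V) (hirr : ∀ u, ¬ A u u) (hA : StrongConn A)
    (hS : ∑ u, (outDeg A u + inDeg A u) * mecc A u = 6 * (Fintype.card V - 1)) :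
    ∃ c : V, ∀ u v : V, A u v ↔ ((u = c ∨ v = c) ∧ u ≠ v) := by
  set n := Fintype.card V with hndef
  set f : V → ℕ := fun u => (outDeg A u + inDeg A u) * mecc A u with hf
  -- there is a hub
  have hhub : ∃ c, IsHub A c := by
    by_contra h
    push_neg at h
    have h2 : 6 * (n - 1) + 1 ≤ ∑ u, f u := S_no_hub hn hirr hA (fun c hc => h c hc)
    have h3 : ∑ u, f u = 6 * (n - 1) := hS
    omega
  obtain ⟨c, hc⟩ := hhub
  have hfc : (2 * (n - 1)) * 1 ≤ f c := by
    have h1 := hub_outDeg hirr hc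
    have h1' := hub_inDeg hirr hc
    have hle : 2 * (n - 1) ≤ outDeg A c + inDeg A c := by omega
    exact Nat.mul_le_mul hle (one_le_mecc hA (by omega) c)
  -- every other vertex contributes at most 4
  have hf4 : ∀ v, v ≠ c → f v ≤ 4 := by
    intro v hv
    by_contra h
    push_neg at h
    have hvmem : v ∈ univ.erase c := Finset.mem_erase.mpr ⟨hv, mem_univ v⟩
    have hsplit2 : ∑ u ∈ univ.erase c, f u
        = f v + ∑ u ∈ (univ.erase c).erase v, f u :=
      (Finset.add_sum_erase _ f hvmem).symm
    have hcard2 : ((univ.erase c).erase v).card = n - 2 := by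
      rw [Finset.card_erase_of_mem hvmem, Finset.card_erase_of_mem (mem_univ c),
        Finset.card_univ]
      omega
    have hrest : (n - 2) * 4 ≤ ∑ u ∈ (univ.erase c).erase v, f u := by
      have := Finset.card_nsmul_le_sum ((univ.erase c).erase v) f 4
        (fun x _ => four_le_f hn hirr hA x)
      rwa [hcard2, smul_eq_mul] at this
    rw [sum_split c f, hsplit2] at hS
    omega
  -- hence degsum = 2 and unique neighbours = c
  have hstruct : ∀ v, v ≠ c → (∀ x, A v x → x = c) ∧ (∀ x, A x v → x = c) := by
    intro v hv
    have h4 := hf4 v hv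
    have hnothub : ¬ IsHub A v := by
      intro hv'
      have h1 := hub_outDeg hirr hv'
      have h1' := hub_inDeg hirr hv'
      have hm1 := one_le_mecc hA (by omega) v
      have : (2 * (n - 1)) * 1 ≤ f v := by
        have hle : 2 * (n - 1) ≤ outDeg A v + inDeg A v := by omega
        exact Nat.mul_le_mul hle hm1
      omega
    have hm2 := two_le_mecc_of_not_hub hA (by omega) hnothub
    have hov := one_le_outDeg hA (by omega) v
    have hiv := one_le_inDeg hA (by omega) v
    have hds : outDeg A v + inDeg A v = 2 := by
      by_contra h
      have h3 : 3 ≤ outDeg A v + inDeg A v := by omega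
      have : 3 * 2 ≤ f v := Nat.mul_le_mul h3 hm2
      omega
    have ho1 : outDeg A v = 1 := by omega
    have hi1 : inDeg A v = 1 := by omega
    have hco : ({x | A v x} : Set V).ncard = 1 := by rw [← outDeg_eq_ncard]; exact ho1
    have hci : ({x | A x v} : Set V).ncard = 1 := by rw [← inDeg_eq_ncard]; exact hi1
    obtain ⟨q, hq⟩ := Set.ncard_eq_one.mp hco
    obtain ⟨p, hp⟩ := Set.ncard_eq_one.mp hci
    have hqc : q = c := by
      have : c ∈ {x | A v x} := (hc v hv).2
      rw [hq, Set.mem_singleton_iff] at this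
      exact this.symm
    have hpc : p = c := by
      have : c ∈ {x | A x v} := (hc v hv).1
      rw [hp, Set.mem_singleton_iff] at this
      exact this.symm
    subst hqc; subst hpc
    constructor
    · intro x hx
      have : x ∈ {x | A v x} := hx
      rw [hq, Set.mem_singleton_iff] at this
      exact this
    · intro x hx
      have : x ∈ {x | A x v} := hx
      rw [hp, Set.mem_singleton_iff] at this
      exact this
  refine ⟨c, fun u v => ?_⟩
  constructor
  · intro h
    have hne : u ≠ v := fun he => hirr u (he ▸ h)
    refine ⟨?_, hne⟩
    rcases eq_or_ne u c with rfl | hu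
    · exact Or.inl rfl
    · exact Or.inr ((hstruct u hu).1 v h)
  · rintro ⟨h1, hne⟩
    rcases h1 with rfl | rfl
    · exact (hc v (fun h => hne h.symm)).1
    · exact (hc u hne).2

end Eq

/-- For a strongly connected digraph on `n ≥ 4` vertices, `ξ^C(D) ≥ 3(n−1)`, with equality
iff `D` is the complete biorientation of the star `S_n`. -/
theorem xiC_ge_star [Fintype V] (A : V → V → Prop)
    (hn : 4 ≤ Fintype.card V) (hirr : ∀ u, ¬ A u u) (hA : StrongConn A) :
    3 * ((Fintype.card V : ℚ) - 1) ≤ xiC A ∧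
      (xiC A = 3 * ((Fintype.card V : ℚ) - 1) ↔
        ∃ c : V, ∀ u v : V, A u v ↔ ((u = c ∨ v = c) ∧ u ≠ v)) := by
  classical
  have hxiC : xiC A = ((∑ u, (outDeg A u + inDeg A u) * mecc A u : ℕ) : ℚ) / 2 := by
    unfold xiC
    push_cast
    ring
  have h1 : 1 ≤ Fintype.card V := by omega
  have hcast : ((6 * (Fintype.card V - 1) : ℕ) : ℚ) = 6 * ((Fintype.card V : ℚ) - 1) := by
    rw [Nat.cast_mul, Nat.cast_sub h1]
    norm_num
  have hlow : 6 * (Fintype.card V - 1) ≤ ∑ u, (outDeg A u + inDeg A u) * mecc A u := by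
    by_cases h : ∃ c, IsHub A c
    · obtain ⟨c, hc⟩ := h
      exact S_hub hn hirr hA hc
    · push_neg at h
      have := S_no_hub hn hirr hA h
      omega
  constructor
  · rw [hxiC]
    have hle := (Nat.cast_le (α := ℚ)).mpr hlow
    rw [hcast] at hle
    linarith
  · constructor
    · intro heq
      apply eq_forward hn hirr hA
      apply Nat.cast_injective (R := ℚ)
      rw [hcast]
      rw [hxiC] at heq
      linarith
    · rintro ⟨c, hstar⟩
      have hb := eq_backward hn hirr hA hstar
      rw [hxiC, hb, hcast]
      ring
end

section
/- In the digraph P_n* obtained from the complete biorientation of the path u_1…u_n by adding the arc (u_1,u_n), every pair of vertices has the same maximum distance md(u_i,u_j) = |i−j| as in the biorientation of the path; in particular mecc(u_i) = max{i−1, n−i} for each i. -/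
open Finset

variable {V : Type*}

lemma walkLen_lower {n : ℕ} (A : Fin n → Fin n → Prop)
    (hA : ∀ i j, A i j → (i : ℕ) ≤ (j : ℕ) + 1) :
    ∀ k (i j : Fin n), WalkLen A k i j → (i : ℕ) ≤ (j : ℕ) + k := by
  intro k
  induction k with
  | zero => intro i j h; cases h; omega
  | succ m ih =>
    rintro i j ⟨w, haw, hw⟩
    have h1 := hA i w haw
    have h2 := ih w j hw
    omega

lemma walkLen_adj {n : ℕ} (A : Fin n → Fin n → Prop)
    (hA : ∀ i j : Fin n, ((i : ℕ) + 1 = (j : ℕ) ∨ (j : ℕ) + 1 = (i : ℕ)) → A i j) :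
    ∀ k (i j : Fin n), ((i : ℕ) + k = (j : ℕ) ∨ (j : ℕ) + k = (i : ℕ)) → WalkLen A k i j := by
  intro k
  induction k with
  | zero => intro i j h; exact Fin.ext (by omega)
  | succ m ih =>
    intro i j h
    rcases h with h | h
    · have hj : (j : ℕ) < n := j.isLt
      refine ⟨⟨(i : ℕ) + 1, by omega⟩, hA _ _ (Or.inl rfl), ih _ _ (Or.inl (by simp; omega))⟩
    · have hi : (i : ℕ) < n := i.isLt
      refine ⟨⟨(i : ℕ) - 1, by omega⟩, hA _ _ (Or.inr (by simp; omega)), ih _ _ (Or.inr (by simp; omega))⟩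

/-- In `P_n*` every pair of vertices has the same maximum distance `|i − j|` as in the
biorientation of the path; in particular `mecc(u_i) = max{i−1, n−i}` (0-indexed:
`max i (n−1−i)`). -/
theorem md_pathStar (n : ℕ) (hn : 2 ≤ n) :
    (∀ i j : Fin n,
        md (fun i j : Fin n =>
            ((i : ℕ) + 1 = (j : ℕ) ∨ (j : ℕ) + 1 = (i : ℕ)) ∨
              ((i : ℕ) = 0 ∧ (j : ℕ) = n - 1)) i j =
          max ((i : ℕ) - (j : ℕ)) ((j : ℕ) - (i : ℕ))) ∧
    ∀ i : Fin n,
      mecc (fun i j : Fin n =>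
          ((i : ℕ) + 1 = (j : ℕ) ∨ (j : ℕ) + 1 = (i : ℕ)) ∨
            ((i : ℕ) = 0 ∧ (j : ℕ) = n - 1)) i =
        max (i : ℕ) (n - 1 - (i : ℕ)) := by
  set A := fun i j : Fin n =>
      ((i : ℕ) + 1 = (j : ℕ) ∨ (j : ℕ) + 1 = (i : ℕ)) ∨
        ((i : ℕ) = 0 ∧ (j : ℕ) = n - 1) with hAdef
  have hAlow : ∀ i j : Fin n, A i j → (i : ℕ) ≤ (j : ℕ) + 1 := by
    rintro i j (h | h) <;> omega
  have hAadj : ∀ i j : Fin n, ((i : ℕ) + 1 = (j : ℕ) ∨ (j : ℕ) + 1 = (i : ℕ)) → A i j :=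
    fun i j h => Or.inl h
  have hwalk : ∀ i j : Fin n, WalkLen A (max ((i : ℕ) - (j : ℕ)) ((j : ℕ) - (i : ℕ))) i j := by
    intro i j
    exact walkLen_adj A hAadj _ i j (by omega)
  have hdle : ∀ i j : Fin n, ddist A i j ≤ max ((i : ℕ) - (j : ℕ)) ((j : ℕ) - (i : ℕ)) :=
    fun i j => Nat.sInf_le (hwalk i j)
  have hdge : ∀ i j : Fin n, (i : ℕ) ≤ (j : ℕ) + ddist A i j := by
    intro i j
    have hne : {m | WalkLen A m i j}.Nonempty := ⟨_, hwalk i j⟩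
    exact walkLen_lower A hAlow _ i j (Nat.sInf_mem hne)
  have hmd : ∀ i j : Fin n, md A i j = max ((i : ℕ) - (j : ℕ)) ((j : ℕ) - (i : ℕ)) := by
    intro i j
    have h1 := hdle i j
    have h2 := hdle j i
    have h3 := hdge i j
    have h4 := hdge j i
    unfold md
    omega
  refine ⟨hmd, fun i => ?_⟩
  unfold mecc
  apply le_antisymm
  · apply Finset.sup_le
    intro j _
    rw [hmd]
    have := j.isLt
    omega
  · have h0 : md A i ⟨0, by omega⟩ ≤ Finset.univ.sup (md A i) :=
      Finset.le_sup (Finset.mem_univ _)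
    have h1 : md A i ⟨n - 1, by omega⟩ ≤ Finset.univ.sup (md A i) :=
      Finset.le_sup (Finset.mem_univ _)
    rw [hmd] at h0 h1
    simp only at h0 h1
    have := i.isLt
    omega
end

section
/- For a strongly connected digraph D on n vertices, if every vertex u with mecc(u) ≥ 2 has total degree d_u^+ + d_u^- ≥ 3 except for ℓ vertices with d_u^+ = d_u^- = 1, and ℓ ≤ 3, then ξ^C(D) ≥ 3n − ℓ ≥ 3(n−1). -/
open Finset

variable {V : Type*}

/-- If every vertex of a strongly connected digraph `D` on `n` vertices has `mecc ≥ 2`,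
and all vertices have total degree `≥ 3` except `ℓ ≤ 3` vertices with out- and in-degree
`1`, then `ξ^C(D) ≥ 3n − ℓ ≥ 3(n−1)`. -/
theorem xiC_ge_three_n_sub [Fintype V] (A : V → V → Prop) (hA : StrongConn A)
    (hm : ∀ u : V, 2 ≤ mecc A u) (L : Finset V) (ℓ : ℕ) (hL : L.card = ℓ)
    (h1 : ∀ u ∈ L, outDeg A u = 1 ∧ inDeg A u = 1)
    (h3 : ∀ u ∉ L, 3 ≤ outDeg A u + inDeg A u) (hl : ℓ ≤ 3) :
    3 * (Fintype.card V : ℚ) - (ℓ : ℚ) ≤ xiC A ∧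
      3 * ((Fintype.card V : ℚ) - 1) ≤ 3 * (Fintype.card V : ℚ) - (ℓ : ℚ) := by
  classical
  have key : ∀ u : V, 2 * ((outDeg A u + inDeg A u : ℕ) : ℚ)
      ≤ ((outDeg A u + inDeg A u : ℕ) : ℚ) * (mecc A u : ℚ) := by
    intro u
    rw [mul_comm]
    apply mul_le_mul_of_nonneg_left _ (by positivity)
    exact_mod_cast hm u
  have hxi : ∑ u : V, ((outDeg A u + inDeg A u : ℕ) : ℚ) ≤ xiC A := by
    unfold xiC
    rw [Finset.mul_sum]
    apply Finset.sum_le_sum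
    intro u _
    have := key u
    linarith
  have hle : ℓ ≤ Fintype.card V := hL ▸ Finset.card_le_univ L
  have hcompl : (Lᶜ.card : ℚ) = (Fintype.card V : ℚ) - ℓ := by
    rw [Finset.card_compl, hL, Nat.cast_sub hle]
  have hsum : 3 * (Fintype.card V : ℚ) - ℓ ≤ ∑ u : V, ((outDeg A u + inDeg A u : ℕ) : ℚ) := by
    rw [← Finset.sum_add_sum_compl L]
    have hLsum : ∑ u ∈ L, ((outDeg A u + inDeg A u : ℕ) : ℚ) = 2 * ℓ := by
      have heq : ∀ u ∈ L, ((outDeg A u + inDeg A u : ℕ) : ℚ) = 2 := fun u hu => by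
        obtain ⟨ho, hi⟩ := h1 u hu
        rw [ho, hi]; norm_num
      rw [Finset.sum_congr rfl heq, Finset.sum_const, hL]; push_cast; ring
    have hCsum : 3 * ((Fintype.card V : ℚ) - ℓ) ≤ ∑ u ∈ Lᶜ, ((outDeg A u + inDeg A u : ℕ) : ℚ) := by
      calc 3 * ((Fintype.card V : ℚ) - ℓ) = ∑ _u ∈ Lᶜ, (3 : ℚ) := by
            rw [Finset.sum_const, nsmul_eq_mul, hcompl]; ring
        _ ≤ _ := Finset.sum_le_sum fun u hu => by
            exact_mod_cast h3 u (Finset.mem_compl.mp hu)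
    linarith
  refine ⟨le_trans (by linarith) hxi, by
    have : (ℓ : ℚ) ≤ 3 := by exact_mod_cast hl
    linarith⟩
end
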